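/- Let Φ and Ψ be frames for H and m a symbol with constant modulus |m_n| = c ≠ 0 for all n. Then the following are equivalent: (i) M_{m,Φ,Ψ} is invertible and M_{m,Φ,Ψ}^{-1} = M_{1/m, Ψ̃, Φ̃}; (ii) Ψ is equivalent to mΦ; (iii) Φ is equivalent to m̄Ψ. -/

import Mathlib

open scoped ComplexConjugate ComplexInnerProductSpace

variable {H : Type*} [NormedAddCommGroup H] [InnerProductSpace ℂ H] [CompleteSpace H]

/-- `Φ` is a Bessel sequence in `H`. -/
def IsBessel (Φ : ℕ → H) : Prop :=
  ∃ B : ℝ, 0 < B ∧ ∀ f : H, Summable (fun n => ‖⟪Φ n, f⟫‖ ^ 2) ∧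
    ∑' n, ‖⟪Φ n, f⟫‖ ^ 2 ≤ B * ‖f‖ ^ 2

/-- `Φ` is a frame for `H`. -/
def IsFrame (Φ : ℕ → H) : Prop :=
  ∃ A B : ℝ, 0 < A ∧ 0 < B ∧ ∀ f : H, Summable (fun n => ‖⟪Φ n, f⟫‖ ^ 2) ∧
    A * ‖f‖ ^ 2 ≤ ∑' n, ‖⟪Φ n, f⟫‖ ^ 2 ∧ ∑' n, ‖⟪Φ n, f⟫‖ ^ 2 ≤ B * ‖f‖ ^ 2

/-- `F` is a dual frame of the frame `Φ`:
`f = Σ ⟨f, Φ n⟩ F n = Σ ⟨f, F n⟩ Φ n` for all `f` (paper convention `⟨f, x⟩ = ⟪x, f⟫`). -/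
def IsDualFrame (Φ F : ℕ → H) : Prop :=
  IsFrame F ∧ ∀ f : H, HasSum (fun n => ⟪Φ n, f⟫ • F n) f ∧ HasSum (fun n => ⟪F n, f⟫ • Φ n) f

/-- `F` is an analysis pseudo-dual of `Φ`: `f = Σ ⟨f, F n⟩ Φ n` for all `f`. -/
def IsAPseudoDual (Φ F : ℕ → H) : Prop := ∀ f : H, HasSum (fun n => ⟪F n, f⟫ • Φ n) f

/-- `F` is a synthesis pseudo-dual of `Φ`: `f = Σ ⟨f, Φ n⟩ F n` for all `f`. -/
def IsSPseudoDual (Φ F : ℕ → H) : Prop := ∀ f : H, HasSum (fun n => ⟪Φ n, f⟫ • F n) f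

/-- The frame operator `S_Φ f = Σ ⟨f, Φ n⟩ Φ n`. -/
noncomputable def frameOp (Φ : ℕ → H) (f : H) : H := ∑' n, ⟪Φ n, f⟫ • Φ n

/-- `m` is semi-normalized: `0 < a ≤ ‖m n‖ ≤ b < ∞`. -/
def SemiNormalized (m : ℕ → ℂ) : Prop := ∃ a b : ℝ, 0 < a ∧ ∀ n, a ≤ ‖m n‖ ∧ ‖m n‖ ≤ b
/-!
The analysis operator `T_Φ : H → ℓ²`, `f ↦ (⟨f, φ_n⟩)_n`, of a Bessel sequence is bounded, its
adjoint is the synthesis operator, and for a frame `S_Φ = T_Φ* T_Φ` is bounded below, hence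
invertible, with `φ̃_n = S_Φ⁻¹ φ_n`.

Since `m̄_n m_n = c²`, an isomorphism `V` with `V (m_n φ_n) = ψ_n` gives `c⁻² V⁻¹ (m̄_n ψ_n) = φ_n`
and conversely, so (ii) ⇔ (iii). Given such a `V`, `M_{m,Φ,Ψ} = c² S_Φ V*` and
`S_Ψ = c² V S_Φ V*`, so `ψ̃_n = c⁻² m_n (V*)⁻¹ φ̃_n` and `M_{1/m,Ψ̃,Φ̃} = c⁻² (V*)⁻¹ S_Φ⁻¹` is the
inverse of `M_{m,Φ,Ψ}`. Conversely, if `M_{1/m,Ψ̃,Φ̃}` inverts `M = M_{m,Φ,Ψ}`, fix `g` and let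
`u_n = ⟨g, ψ_n⟩`, `v_n = m_n⁻¹ ⟨M g, φ̃_n⟩`. Both synthesize `g` against `Ψ̃` and `M g` against
`mΦ`, so `u - v` is orthogonal in `ℓ²` to `u` (pair with `S_Ψ g`) and to `v` (pair with
`c⁻² S_Φ⁻¹ M g`); hence `u = v`, which says that `c⁻² M* S_Φ⁻¹` maps `m_n φ_n` to `ψ_n`.
-/

open scoped lp InnerProduct

variable {E : Type*} [NormedAddCommGroup E] [InnerProductSpace ℂ E]

lemma lp.norm_sq_eq_tsum {ι : Type*} (a : ℓ²(ι, ℂ)) : ‖a‖ ^ 2 = ∑' n, ‖a n‖ ^ 2 := by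
  simpa using lp.norm_rpow_eq_tsum (p := 2) (by norm_num) a

lemma eq_of_hasSum_sub_mul_conj {ι : Type*} {u v : ι → ℂ}
    (hu : HasSum (fun n => (u n - v n) * conj (u n)) 0)
    (hv : HasSum (fun n => (u n - v n) * conj (v n)) 0) : u = v := by
  have h : HasSum (fun n => ‖u n - v n‖ ^ 2) 0 := by
    have := (hu.sub hv).mapL Complex.reCLM
    simp only [← mul_sub, ← map_sub, Complex.mul_conj', sub_zero, map_zero] at this
    exact_mod_cast this
  funext n
  rw [← sub_eq_zero, ← norm_eq_zero, ← sq_eq_zero_iff]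
  exact congrFun ((hasSum_zero_iff_of_nonneg fun _ => by positivity).1 h) n

lemma hasSum_mul_conj_inner_of_hasSum_smul_eq_zero {ι : Type*} {d : ι → ℂ} {x : ι → E}
    (h : HasSum (fun n => d n • x n) 0) (y : E) :
    HasSum (fun n => d n * conj ⟪x n, y⟫) 0 := by
  simpa [inner_smul_right] using h.mapL (innerSL ℂ y)

section Adjoint

variable {K : Type*} [NormedAddCommGroup K] [InnerProductSpace ℂ K] [CompleteSpace K]

lemma ContinuousLinearMap.leftInverse_adjoint {A : H →L[ℂ] K} {B : K →L[ℂ] H}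
    (h : Function.LeftInverse A B) : Function.LeftInverse (B†) (A†) := fun y =>
  ext_inner_left ℂ fun x => by
    rw [ContinuousLinearMap.adjoint_inner_right, ContinuousLinearMap.adjoint_inner_right, h]

noncomputable def ContinuousLinearEquiv.adjoint (V : H ≃L[ℂ] K) : K ≃L[ℂ] H :=
  ContinuousLinearEquiv.equivOfInverse ((V : H →L[ℂ] K)†) ((V.symm : K →L[ℂ] H)†)
    (ContinuousLinearMap.leftInverse_adjoint V.apply_symm_apply)
    (ContinuousLinearMap.leftInverse_adjoint V.symm_apply_apply)

@[simp]
lemma ContinuousLinearEquiv.adjoint_apply (V : H ≃L[ℂ] K) (y : K) :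
    V.adjoint y = ((V : H →L[ℂ] K)†) y := rfl

end Adjoint

lemma ContinuousLinearMap.exists_bijective_iff_exists_equiv {𝕜 F : Type*}
    [NontriviallyNormedField 𝕜] [NormedAddCommGroup F] [NormedSpace 𝕜 F] [CompleteSpace F]
    {P : (F →L[𝕜] F) → Prop} :
    (∃ V : F →L[𝕜] F, Function.Bijective V ∧ P V) ↔ ∃ V : F ≃L[𝕜] F, P V := by
  refine ⟨fun ⟨V, hV, hP⟩ => ⟨.ofBijective V (LinearMap.ker_eq_bot.2 hV.1)
    (LinearMap.range_eq_top.2 hV.2), ?_⟩, fun ⟨V, hP⟩ => ⟨V, V.bijective, hP⟩⟩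
  rwa [ContinuousLinearEquiv.coe_ofBijective]

lemma exists_equiv_smul_of_mul_eq {𝕜 F ι : Type*} [NormedField 𝕜] [NormedAddCommGroup F]
    [NormedSpace 𝕜 F] {x y : ι → F} {a b : ι → 𝕜} {k : 𝕜} (hk : k ≠ 0)
    (hab : ∀ n, b n * a n = k) (V : F ≃L[𝕜] F) (hV : ∀ n, V (a n • x n) = y n) :
    ∃ W : F ≃L[𝕜] F, ∀ n, W (b n • y n) = x n := by
  refine ⟨V.symm.trans (.smulLeft (Units.mk0 k⁻¹ (inv_ne_zero hk))), fun n => ?_⟩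
  simp [← hV n, smul_smul, hab, hk]

lemma frameOp_smul {Φ : ℕ → E} {m : ℕ → ℂ} {c : ℝ} (hm : ∀ n, ‖m n‖ = c) (f : E) :
    frameOp (fun n => m n • Φ n) f = ((c : ℂ) ^ 2) • frameOp Φ f := by
  simp only [frameOp, inner_smul_left, smul_smul, ← tsum_const_smul'']
  congr 1 with n
  rw [mul_right_comm, Complex.conj_mul', hm, mul_comm]

lemma IsFrame.isBessel {Φ : ℕ → E} (hΦ : IsFrame Φ) : IsBessel Φ := by
  obtain ⟨_, B, _, hB, h⟩ := hΦ
  exact ⟨B, hB, fun f => ⟨(h f).1, (h f).2.2⟩⟩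

namespace IsBessel

section Analysis

variable {Φ : ℕ → E}

lemma memℓp_inner (hΦ : IsBessel Φ) (f : E) : Memℓp (fun n => ⟪Φ n, f⟫) 2 := by
  refine memℓp_gen ?_
  simpa using (hΦ.choose_spec.2 f).1

noncomputable def analysisOp (hΦ : IsBessel Φ) : E →L[ℂ] ℓ²(ℕ, ℂ) :=
  LinearMap.mkContinuousOfExistsBound
    { toFun := fun f => ⟨fun n => ⟪Φ n, f⟫, hΦ.memℓp_inner f⟩
      map_add' := fun f g => by ext n; exact inner_add_right _ _ _
      map_smul' := fun a f => by ext n; exact inner_smul_right _ _ _ }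
    (by
      obtain ⟨B, hB, hΦB⟩ := hΦ
      refine ⟨√B, fun f => ?_⟩
      rw [← Real.sqrt_sq (norm_nonneg _), ← Real.sqrt_sq (norm_nonneg f), ← Real.sqrt_mul hB.le]
      refine Real.sqrt_le_sqrt ?_
      rw [lp.norm_sq_eq_tsum]
      exact (hΦB f).2)

@[simp]
lemma analysisOp_apply (hΦ : IsBessel Φ) (f : E) (n : ℕ) : hΦ.analysisOp f n = ⟪Φ n, f⟫ := rfl

end Analysis

variable {Φ : ℕ → H}

lemma adjoint_analysisOp_single (hΦ : IsBessel Φ) (n : ℕ) (a : ℂ) :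
    (hΦ.analysisOp†) (lp.single 2 n a) = a • Φ n := by
  refine ext_inner_right ℂ fun g => ?_
  rw [ContinuousLinearMap.adjoint_inner_left, lp.inner_single_left, inner_smul_left,
    analysisOp_apply]
  simp [mul_comm]

lemma hasSum_smul (hΦ : IsBessel Φ) (a : ℓ²(ℕ, ℂ)) :
    HasSum (fun n => a n • Φ n) ((hΦ.analysisOp†) a) := by
  simpa [adjoint_analysisOp_single] using (lp.hasSum_single (by norm_num) a).mapL (hΦ.analysisOp†)

lemma hasSum_frameOp (hΦ : IsBessel Φ) (f : H) :
    HasSum (fun n => ⟪Φ n, f⟫ • Φ n) (frameOp Φ f) :=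
  (hΦ.hasSum_smul (hΦ.analysisOp f)).summable.hasSum

lemma frameOp_eq (hΦ : IsBessel Φ) (f : H) :
    frameOp Φ f = ((hΦ.analysisOp†) ∘L hΦ.analysisOp) f :=
  (hΦ.hasSum_frameOp f).unique (hΦ.hasSum_smul (hΦ.analysisOp f))

lemma inner_frameOp_left (hΦ : IsBessel Φ) (f g : H) : ⟪frameOp Φ f, g⟫ = ⟪f, frameOp Φ g⟫ := by
  simp only [hΦ.frameOp_eq, ContinuousLinearMap.comp_apply, ContinuousLinearMap.adjoint_inner_left,
    ContinuousLinearMap.adjoint_inner_right]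

lemma frameOp_map {K : Type*} [NormedAddCommGroup K] [InnerProductSpace ℂ K]
    [CompleteSpace K] (hΦ : IsBessel Φ) (V : H →L[ℂ] K) (f : K) :
    frameOp (fun n => V (Φ n)) f = V (frameOp Φ ((V†) f)) := by
  refine HasSum.tsum_eq ?_
  simpa [ContinuousLinearMap.adjoint_inner_right] using (hΦ.hasSum_frameOp ((V†) f)).mapL V

end IsBessel

namespace IsFrame

variable {Φ Φt : ℕ → H}

lemma isUnit_frameOp (hΦ : IsFrame Φ) :
    IsUnit (hΦ.isBessel.analysisOp† ∘L hΦ.isBessel.analysisOp) := by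
  obtain ⟨A, _, hA, _, hΦAB⟩ := id hΦ
  refine ContinuousLinearMap.isUnit_of_forall_le_norm_inner_map _ (Real.toNNReal_pos.2 hA)
    fun f => ?_
  rw [ContinuousLinearMap.comp_apply, ContinuousLinearMap.adjoint_inner_left,
    inner_self_eq_norm_sq_to_K, Real.coe_toNNReal _ hA.le]
  simpa [lp.norm_sq_eq_tsum, mul_comm] using (hΦAB f).2.1

noncomputable def frameOpEquiv (hΦ : IsFrame Φ) : H ≃L[ℂ] H :=
  ContinuousLinearEquiv.ofUnit hΦ.isUnit_frameOp.unit

lemma frameOpEquiv_apply (hΦ : IsFrame Φ) (f : H) : hΦ.frameOpEquiv f = frameOp Φ f :=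
  (hΦ.isBessel.frameOp_eq f).symm

lemma inner_frameOpEquiv_symm_left (hΦ : IsFrame Φ) (f g : H) :
    ⟪hΦ.frameOpEquiv.symm f, g⟫ = ⟪f, hΦ.frameOpEquiv.symm g⟫ := by
  conv_rhs => rw [← hΦ.frameOpEquiv.apply_symm_apply f]
  rw [frameOpEquiv_apply, hΦ.isBessel.inner_frameOp_left, ← hΦ.frameOpEquiv_apply,
    ContinuousLinearEquiv.apply_symm_apply]

lemma canonicalDual_eq (hΦ : IsFrame Φ) (hΦt : ∀ n, frameOp Φ (Φt n) = Φ n) (n : ℕ) :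
    Φt n = hΦ.frameOpEquiv.symm (Φ n) := by
  rw [ContinuousLinearEquiv.eq_symm_apply, frameOpEquiv_apply, hΦt]

lemma inner_canonicalDual_left (hΦ : IsFrame Φ) (hΦt : ∀ n, frameOp Φ (Φt n) = Φ n)
    (n : ℕ) (f : H) :
    ⟪Φt n, f⟫ = ⟪Φ n, hΦ.frameOpEquiv.symm f⟫ := by
  rw [hΦ.canonicalDual_eq hΦt, inner_frameOpEquiv_symm_left]

lemma hasSum_inner_smul_canonicalDual (hΦ : IsFrame Φ)
    (hΦt : ∀ n, frameOp Φ (Φt n) = Φ n) (f : H) : HasSum (fun n => ⟪Φ n, f⟫ • Φt n) f := by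
  have := (hΦ.isBessel.hasSum_frameOp f).mapL (hΦ.frameOpEquiv.symm : H →L[ℂ] H)
  simpa [← hΦ.frameOpEquiv_apply, ← hΦ.canonicalDual_eq hΦt] using this

lemma hasSum_inner_canonicalDual_smul_canonicalDual (hΦ : IsFrame Φ)
    (hΦt : ∀ n, frameOp Φ (Φt n) = Φ n) (f : H) :
    HasSum (fun n => ⟪Φt n, f⟫ • Φt n) (hΦ.frameOpEquiv.symm f) := by
  simpa [← hΦ.inner_canonicalDual_left hΦt] using
    hΦ.hasSum_inner_smul_canonicalDual hΦt (hΦ.frameOpEquiv.symm f)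

end IsFrame

section Multiplier

variable {Φ Ψ Φt Ψt : ℕ → H} {m : ℕ → ℂ} {c : ℝ}

lemma ne_zero_of_norm_eq (hm : ∀ n, ‖m n‖ = c) (hc : c ≠ 0) (n : ℕ) : m n ≠ 0 :=
  norm_ne_zero_iff.1 (by rw [hm n]; exact hc)

lemma conj_mul_eq_sq (hm : ∀ n, ‖m n‖ = c) (n : ℕ) : conj (m n) * m n = (c : ℂ) ^ 2 := by
  rw [Complex.conj_mul', hm]

lemma exists_multiplier_inverse_of_equiv (hΦ : IsFrame Φ) (hΨ : IsFrame Ψ)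
    (hm : ∀ n, ‖m n‖ = c) (hc : c ≠ 0)
    (hΦt : ∀ n, frameOp Φ (Φt n) = Φ n) (hΨt : ∀ n, frameOp Ψ (Ψt n) = Ψ n)
    (V : H ≃L[ℂ] H) (hV : ∀ n, V (m n • Φ n) = Ψ n) :
    ∃ M N : H →L[ℂ] H,
      (∀ f : H, HasSum (fun n => (m n * ⟪Ψ n, f⟫) • Φ n) (M f)) ∧
      (∀ f : H, N (M f) = f) ∧ (∀ f : H, M (N f) = f) ∧
      (∀ f : H, HasSum (fun n => ((m n)⁻¹ * ⟪Φt n, f⟫) • Ψt n) (N f)) := by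
  set k : ℂ := (c : ℂ) ^ 2
  have hk : k ≠ 0 := pow_ne_zero 2 (Complex.ofReal_ne_zero.2 hc)
  have hm0 := ne_zero_of_norm_eq hm hc
  have hΨ_eq : Ψ = fun n => m n • (V : H →L[ℂ] H) (Φ n) :=
    funext fun n => by rw [← hV n, map_smul]; rfl
  have hinner_Ψ (n : ℕ) (f : H) : ⟪Ψ n, f⟫ = conj (m n) * ⟪Φ n, V.adjoint f⟫ := by
    rw [← hV n, map_smul, inner_smul_left, V.adjoint_apply, ContinuousLinearMap.adjoint_inner_right]
    rfl
  have hframeOp_Ψ (f : H) : frameOp Ψ f = k • V (hΦ.frameOpEquiv (V.adjoint f)) := by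
    rw [hΨ_eq, frameOp_smul hm, hΦ.isBessel.frameOp_map, ← hΦ.frameOpEquiv_apply]
    rfl
  have hΨt_eq (n : ℕ) : Ψt n = (k⁻¹ * m n) • V.adjoint.symm (Φt n) := by
    refine hΨ.frameOpEquiv.injective ?_
    rw [hΨ.frameOpEquiv_apply, hΨ.frameOpEquiv_apply, hΨt, hframeOp_Ψ, map_smul,
      ContinuousLinearEquiv.apply_symm_apply, map_smul, hΦ.frameOpEquiv_apply, hΦt, map_smul,
      smul_smul, ← mul_assoc, mul_inv_cancel₀ hk, one_mul, ← map_smul, hV]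
  set E := V.adjoint.trans hΦ.frameOpEquiv
  refine ⟨k • (E : H →L[ℂ] H), k⁻¹ • (E.symm : H →L[ℂ] H), fun f => ?_, fun f => ?_,
    fun f => ?_, fun f => ?_⟩
  · convert (hΦ.isBessel.hasSum_frameOp (V.adjoint f)).const_smul k using 1
    · ext n
      rw [smul_smul, hinner_Ψ, ← mul_assoc, mul_comm (m n), conj_mul_eq_sq hm]
    · simp [E, hΦ.frameOpEquiv_apply]
  · simp [smul_smul, hk]
  · simp [smul_smul, hk]
  · convert ((hΦ.hasSum_inner_canonicalDual_smul_canonicalDual hΦt f).mapL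
      (V.adjoint.symm : H →L[ℂ] H)).const_smul k⁻¹ using 1
    · ext n
      simp only [hΨt_eq, ContinuousLinearEquiv.coe_coe, map_smul, smul_smul]
      congr 1
      field_simp [hm0 n]
    · simp [E]

lemma inner_canonicalDual_map_eq_of_multiplier_inverse (hΦ : IsFrame Φ) (hΨ : IsFrame Ψ)
    (hm : ∀ n, ‖m n‖ = c) (hc : c ≠ 0)
    (hΦt : ∀ n, frameOp Φ (Φt n) = Φ n) (hΨt : ∀ n, frameOp Ψ (Ψt n) = Ψ n) {M N : H →L[ℂ] H}
    (hM : ∀ f : H, HasSum (fun n => (m n * ⟪Ψ n, f⟫) • Φ n) (M f))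
    (hNM : ∀ f : H, N (M f) = f)
    (hN : ∀ f : H, HasSum (fun n => ((m n)⁻¹ * ⟪Φt n, f⟫) • Ψt n) (N f)) (g : H) (n : ℕ) :
    ⟪Φt n, M g⟫ = m n * ⟪Ψ n, g⟫ := by
  have hm0 := ne_zero_of_norm_eq hm hc
  set h := hΦ.frameOpEquiv.symm (M g)
  rw [hΦ.inner_canonicalDual_left hΦt]
  suffices (fun n => ⟪Ψ n, g⟫) = fun n => (m n)⁻¹ * ⟪Φ n, h⟫ by
    rw [congrFun this n, mul_inv_cancel_left₀ (hm0 n)]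
  refine eq_of_hasSum_sub_mul_conj ?_ ?_
  · have h0 : HasSum (fun n => (⟪Ψ n, g⟫ - (m n)⁻¹ * ⟪Φ n, h⟫) • Ψt n) 0 := by
      simpa [sub_smul, hΦ.inner_canonicalDual_left hΦt, hNM] using
        (hΨ.hasSum_inner_smul_canonicalDual hΨt g).sub (hN (M g))
    convert hasSum_mul_conj_inner_of_hasSum_smul_eq_zero h0 (hΨ.frameOpEquiv g) using 4 with n
    rw [hΨ.inner_canonicalDual_left hΨt, ContinuousLinearEquiv.symm_apply_apply]
  · have h0 : HasSum (fun n => (⟪Ψ n, g⟫ - (m n)⁻¹ * ⟪Φ n, h⟫) • (m n • Φ n)) 0 := by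
      have hS := hΦ.isBessel.hasSum_frameOp h
      rw [← hΦ.frameOpEquiv_apply, ContinuousLinearEquiv.apply_symm_apply] at hS
      convert (hM g).sub hS using 2 with n
      · rw [smul_smul, ← sub_smul]
        congr 1
        field_simp [hm0 n]
      · rw [sub_self]
    convert hasSum_mul_conj_inner_of_hasSum_smul_eq_zero h0 (((c : ℂ) ^ 2)⁻¹ • h) using 4 with n
    rw [inner_smul_left, inner_smul_right, ← conj_mul_eq_sq hm n]
    field_simp [hm0 n, (map_ne_zero _).2 (hm0 n)]

lemma exists_equiv_of_multiplier_inverse (hΦ : IsFrame Φ) (hΨ : IsFrame Ψ)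
    (hm : ∀ n, ‖m n‖ = c) (hc : c ≠ 0)
    (hΦt : ∀ n, frameOp Φ (Φt n) = Φ n) (hΨt : ∀ n, frameOp Ψ (Ψt n) = Ψ n) {M N : H →L[ℂ] H}
    (hM : ∀ f : H, HasSum (fun n => (m n * ⟪Ψ n, f⟫) • Φ n) (M f))
    (hNM : ∀ f : H, N (M f) = f) (hMN : ∀ f : H, M (N f) = f)
    (hN : ∀ f : H, HasSum (fun n => ((m n)⁻¹ * ⟪Φt n, f⟫) • Ψt n) (N f)) :
    ∃ V : H ≃L[ℂ] H, ∀ n, V (m n • Φ n) = Ψ n := by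
  have hk : ((c : ℂ) ^ 2)⁻¹ ≠ 0 := inv_ne_zero (pow_ne_zero 2 (Complex.ofReal_ne_zero.2 hc))
  have hm0 := ne_zero_of_norm_eq hm hc
  set EM := ContinuousLinearEquiv.equivOfInverse M N hNM hMN
  refine ⟨(hΦ.frameOpEquiv.symm.trans EM.adjoint).trans (.smulLeft (Units.mk0 _ hk)),
    fun n => ext_inner_right ℂ fun g => ?_⟩
  simp only [ContinuousLinearEquiv.trans_apply, ContinuousLinearEquiv.smulLeft_apply_apply,
    Units.smul_mk0, map_smul, inner_smul_left, ContinuousLinearEquiv.adjoint_apply,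
    ContinuousLinearMap.adjoint_inner_left, ← hΦ.canonicalDual_eq hΦt,
    ContinuousLinearEquiv.coe_coe, EM, ContinuousLinearEquiv.equivOfInverse_apply,
    inner_canonicalDual_map_eq_of_multiplier_inverse hΦ hΨ hm hc hΦt hΨt hM hNM hN, map_inv₀,
    ← conj_mul_eq_sq hm n, map_mul, Complex.conj_conj]
  field_simp [hm0 n, (map_ne_zero _).2 (hm0 n)]

end Multiplier

theorem stmt15 (Φ Ψ : ℕ → H) (m : ℕ → ℂ) (hΦ : IsFrame Φ) (hΨ : IsFrame Ψ)
    (c : ℝ) (hc : c ≠ 0) (hmod : ∀ n, ‖m n‖ = c)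
    (Φt Ψt : ℕ → H)
    (hΦt : ∀ n, frameOp Φ (Φt n) = Φ n) (hΨt : ∀ n, frameOp Ψ (Ψt n) = Ψ n) :
    ((∃ M N : H →L[ℂ] H,
        (∀ f : H, HasSum (fun n => (m n * ⟪Ψ n, f⟫) • Φ n) (M f)) ∧
        (∀ f : H, N (M f) = f) ∧ (∀ f : H, M (N f) = f) ∧
        (∀ f : H, HasSum (fun n => ((m n)⁻¹ * ⟪Φt n, f⟫) • Ψt n) (N f)))
      ↔ (∃ V : H →L[ℂ] H, Function.Bijective V ∧ ∀ n, V (m n • Φ n) = Ψ n)) ∧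
    ((∃ V : H →L[ℂ] H, Function.Bijective V ∧ ∀ n, V (m n • Φ n) = Ψ n)
      ↔ (∃ V : H →L[ℂ] H, Function.Bijective V ∧ ∀ n, V ((starRingEnd ℂ) (m n) • Ψ n) = Φ n)) := by
  have hk : (c : ℂ) ^ 2 ≠ 0 := pow_ne_zero 2 (Complex.ofReal_ne_zero.2 hc)
  simp only [ContinuousLinearMap.exists_bijective_iff_exists_equiv, ContinuousLinearEquiv.coe_coe]
  refine ⟨⟨fun ⟨M, N, hM, hNM, hMN, hN⟩ => ?_, fun ⟨V, hV⟩ => ?_⟩,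
    ⟨fun ⟨V, hV⟩ => ?_, fun ⟨V, hV⟩ => ?_⟩⟩
  · exact exists_equiv_of_multiplier_inverse hΦ hΨ hmod hc hΦt hΨt hM hNM hMN hN
  · exact exists_multiplier_inverse_of_equiv hΦ hΨ hmod hc hΦt hΨt V hV
  · exact exists_equiv_smul_of_mul_eq hk (conj_mul_eq_sq hmod) V hV
  · exact exists_equiv_smul_of_mul_eq hk (fun n => by rw [mul_comm, conj_mul_eq_sq hmod]) V hV
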